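/- arXiv:2001.04067 — 7 statements merged into one kernel-verified Lean document; each statement's English description precedes it below -/
import Mathlib

section
/- Let f : ℝ → ℝ be convex and antitone (decreasing), and let A = (a_1,…,a_n), B = (b_1,…,b_n) be two finite sequences of reals such that A weakly majorizes B from below, i.e., for every k = 1,…,n the sum of the k smallest entries of A is at least the sum of the k smallest entries of B. Then f(a_1)+⋯+f(a_n) ≤ f(b_1)+⋯+f(b_n). -/
/-!
Sort `A` and `B` increasingly. Let `g` be the right derivative of `f`: it is nondecreasing, and
nonpositive since `f` is antitone. The supporting line of `f` at `aᵢ` gives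
`f aᵢ - f bᵢ ≤ g aᵢ * (aᵢ - bᵢ)`, and by Abel summation the sum of these bounds is `≤ 0`, because
the coefficients `g aᵢ` are nondecreasing and nonpositive while the partial sums of `aᵢ - bᵢ` are
nonnegative by the majorization hypothesis.
-/

/-- The sum of the `k` smallest elements of a multiset of reals. -/
noncomputable def kSmallestSum (M : Multiset ℝ) (k : ℕ) : ℝ := ((M.sort (· ≤ ·)).take k).sum

/-- `A` weakly majorizes `B` (from below): for every `k`, the sum of the `k`
smallest entries of `A` is at least that of `B`. -/
def WeakMaj (A B : Multiset ℝ) : Prop := ∀ k : ℕ, kSmallestSum B k ≤ kSmallestSum A k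

/-- The multiset of values of a finite sequence. -/
def seqMultiset {n : ℕ} (a : Fin n → ℝ) : Multiset ℝ := Finset.univ.val.map a

open Finset

theorem Finset.sum_range_mul_nonpos {R : Type*} [CommRing R] [PartialOrder R] [IsOrderedRing R]
    {c x : ℕ → R} {n : ℕ}
    (hc : MonotoneOn c (Set.Iio n)) (hc_nonpos : ∀ i < n, c i ≤ 0)
    (hx : ∀ k ≤ n, 0 ≤ ∑ i ∈ range k, x i) :
    ∑ i ∈ range n, c i * x i ≤ 0 := by
  have h := sum_range_by_parts c x n
  simp only [smul_eq_mul] at h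
  rw [h, sub_nonpos]
  rcases n.eq_zero_or_pos with rfl | hn
  · simp
  calc c (n - 1) * ∑ i ∈ range n, x i ≤ 0 :=
        mul_nonpos_of_nonpos_of_nonneg (hc_nonpos _ (by omega)) (hx n le_rfl)
    _ ≤ _ := sum_nonneg fun i hi => by
        have hi := mem_range.mp hi
        have hcoef : c i ≤ c (i + 1) :=
          hc (Set.mem_Iio.mpr (by omega)) (Set.mem_Iio.mpr (by omega)) i.le_succ
        exact mul_nonneg (sub_nonneg.mpr hcoef) (hx _ (by omega))

theorem ConvexOn.add_rightDeriv_mul_sub_le {S : Set ℝ} {f : ℝ → ℝ} (hf : ConvexOn ℝ S f)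
    {x y : ℝ} (hx : x ∈ interior S) (hy : y ∈ S) :
    f x + derivWithin f (Set.Ioi x) x * (y - x) ≤ f y := by
  rcases lt_trichotomy x y with hxy | rfl | hyx
  · have h := hf.rightDeriv_le_slope_of_mem_interior hx hy hxy
    rw [slope_def_field, le_div_iff₀ (sub_pos.mpr hxy)] at h
    linarith
  · simp
  · have h := (hf.slope_le_leftDeriv_of_mem_interior hy hx hyx).trans
      (hf.leftDeriv_le_rightDeriv_of_mem_interior hx)
    rw [slope_def_field, div_le_iff₀ (sub_pos.mpr hyx)] at h
    linarith

theorem ConvexOn.sum_comp_le_of_prefix_sums_le {f : ℝ → ℝ} (hf : ConvexOn ℝ Set.univ f)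
    (hf_anti : Antitone f) {a b : ℕ → ℝ} {n : ℕ} (ha : MonotoneOn a (Set.Iio n))
    (hab : ∀ k ≤ n, ∑ i ∈ range k, b i ≤ ∑ i ∈ range k, a i) :
    ∑ i ∈ range n, f (a i) ≤ ∑ i ∈ range n, f (b i) := by
  set c : ℕ → ℝ := fun i => derivWithin f (Set.Ioi (a i)) (a i)
  have hc : MonotoneOn c (Set.Iio n) := fun i hi j hj hij =>
    hf.monotoneOn_rightDeriv (by simp) (by simp) (ha hi hj hij)
  have hc_nonpos : ∀ i < n, c i ≤ 0 := fun i _ => (hf_anti.antitoneOn _).derivWithin_nonpos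
  have hx : ∀ k ≤ n, 0 ≤ ∑ i ∈ range k, (a i - b i) := fun k hk => by
    rw [sum_sub_distrib, sub_nonneg]
    exact hab k hk
  rw [← sub_nonpos, ← sum_sub_distrib]
  calc ∑ i ∈ range n, (f (a i) - f (b i)) ≤ ∑ i ∈ range n, c i * (a i - b i) :=
        sum_le_sum fun i _ => by
          have := hf.add_rightDeriv_mul_sub_le (x := a i) (y := b i) (by simp) (Set.mem_univ _)
          linarith
    _ ≤ 0 := sum_range_mul_nonpos hc hc_nonpos hx

theorem List.sum_take_eq_sum_range_getD {M : Type*} [AddCommMonoid M] (l : List M) (k : ℕ) :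
    (l.take k).sum = ∑ i ∈ Finset.range k, l.getD i 0 := by
  induction k with
  | zero => simp
  | succ k ih =>
    rw [Finset.sum_range_succ, ← ih]
    rcases lt_or_ge k l.length with hk | hk
    · rw [sum_take_succ _ _ hk, getD_eq_getElem _ _ hk]
    · rw [take_of_length_le hk, take_of_length_le (by omega), getD_eq_default _ _ hk, add_zero]

namespace Multiset

noncomputable def sortedSeq (M : Multiset ℝ) (i : ℕ) : ℝ := (M.sort (· ≤ ·)).getD i 0

theorem sortedSeq_monotoneOn (M : Multiset ℝ) : MonotoneOn M.sortedSeq (Set.Iio (card M)) := by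
  intro i hi j hj hij
  have hj : j < (M.sort (· ≤ ·)).length := by simpa using hj
  simp only [sortedSeq, List.getD_eq_getElem _ _ hj, List.getD_eq_getElem _ _ (hij.trans_lt hj)]
  exact (M.pairwise_sort (· ≤ ·)).sortedLE.getElem_le_getElem_of_le hij

theorem kSmallestSum_eq_sum_range (M : Multiset ℝ) (k : ℕ) :
    kSmallestSum M k = ∑ i ∈ Finset.range k, M.sortedSeq i :=
  List.sum_take_eq_sum_range_getD _ k

theorem sum_map_eq_sum_range_sortedSeq (M : Multiset ℝ) (f : ℝ → ℝ) :
    (M.map f).sum = ∑ i ∈ Finset.range (card M), f (M.sortedSeq i) := by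
  set l := M.sort (· ≤ ·)
  have hlen : l.length = card M := length_sort _
  calc (M.map f).sum = (l.map f).sum := by rw [← sum_coe, ← map_coe, sort_eq]
    _ = ((l.map f).take (card M)).sum := by rw [List.take_of_length_le (by simp [hlen])]
    _ = ∑ i ∈ Finset.range (card M), (l.map f).getD i 0 := List.sum_take_eq_sum_range_getD _ _
    _ = ∑ i ∈ Finset.range (card M), f (M.sortedSeq i) := Finset.sum_congr rfl fun i hi => by
      have hi : i < l.length := hlen ▸ Finset.mem_range.mp hi
      rw [List.getD_eq_getElem _ _ (by simpa using hi), List.getElem_map, sortedSeq,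
        List.getD_eq_getElem _ _ hi]

end Multiset

theorem WeakMaj.sum_map_le {f : ℝ → ℝ} (hf : ConvexOn ℝ Set.univ f) (hf_anti : Antitone f)
    {A B : Multiset ℝ} (hAB : WeakMaj A B) (hcard : Multiset.card A = Multiset.card B) :
    (A.map f).sum ≤ (B.map f).sum := by
  rw [A.sum_map_eq_sum_range_sortedSeq, B.sum_map_eq_sum_range_sortedSeq, ← hcard]
  refine hf.sum_comp_le_of_prefix_sums_le hf_anti A.sortedSeq_monotoneOn fun k _ => ?_
  simpa only [Multiset.kSmallestSum_eq_sum_range] using hAB k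

/-- Weak Karamata (majorization) inequality for convex decreasing functions. -/
theorem weak_karamata {n : ℕ} (f : ℝ → ℝ) (hconv : ConvexOn ℝ Set.univ f)
    (hanti : Antitone f) (A B : Fin n → ℝ)
    (hmaj : WeakMaj (seqMultiset A) (seqMultiset B)) :
    ∑ i, f (A i) ≤ ∑ i, f (B i) := by
  have h := hmaj.sum_map_le hconv hanti (by simp [seqMultiset])
  rw [seqMultiset, seqMultiset, Multiset.map_map, Multiset.map_map] at h
  rwa [sum_eq_multiset_sum, sum_eq_multiset_sum]
end

section
/- If for every convex decreasing function g : ℝ → ℝ one has g(a_1)+⋯+g(a_n) ≤ g(b_1)+⋯+g(b_n), then the sequence A = (a_1,…,a_n) weakly majorizes B = (b_1,…,b_n), i.e., for every k the sum of the k smallest entries of A is at least the sum of the k smallest entries of B. -/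
/-- The multiset of pairwise `ρ`-values of an `m`-point configuration. -/
def pairMultiset {S : Type*} {m : ℕ} (ρ : S → S → ℝ) (X : Fin m → S) : Multiset ℝ :=
  ((Finset.univ.filter (fun q : Fin m × Fin m => q.1 < q.2)).val).map
    (fun q => ρ (X q.1) (X q.2))

def hinge (t x : ℝ) : ℝ := max (t - x) 0

lemma convexOn_hinge (t : ℝ) : ConvexOn ℝ Set.univ (hinge t) :=
  ((convexOn_const t convex_univ).sub (concaveOn_id convex_univ)).sup
    (convexOn_const 0 convex_univ)

lemma antitone_hinge (t : ℝ) : Antitone (hinge t) :=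
  fun _ _ hxy => max_le_max (by linarith) le_rfl

lemma hinge_nonneg (t x : ℝ) : 0 ≤ hinge t x := le_max_right _ _

namespace List

lemma length_take_mul_le_sum_take_add_sum_map_hinge (l : List ℝ) (k : ℕ) (t : ℝ) :
    (l.take k).length * t ≤ (l.take k).sum + (l.map (hinge t)).sum := by
  induction l generalizing k with
  | nil => simp
  | cons a l ih =>
    cases k with
    | zero =>
      have : 0 ≤ ((a :: l).map (hinge t)).sum := sum_nonneg (by simp [hinge_nonneg])
      simpa using this
    | succ k =>
      have ha : t - a ≤ hinge t a := le_max_left _ _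
      simp only [take_succ_cons, length_cons, sum_cons, map_cons, Nat.cast_succ]
      linarith [ih k]

lemma length_take_mul_eq_sum_take_add_sum_map_hinge (l : List ℝ) (k : ℕ) (t : ℝ)
    (hle : ∀ x ∈ l.take k, x ≤ t) (hge : ∀ x ∈ l.drop k, t ≤ x) :
    (l.take k).length * t = (l.take k).sum + (l.map (hinge t)).sum := by
  induction l generalizing k with
  | nil => simp
  | cons a l ih =>
    cases k with
    | zero =>
      have hzero : ∀ x ∈ a :: l, hinge t x = 0 := fun x hx => max_eq_right (by linarith [hge x hx])
      simp [map_congr_left hzero]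
    | succ k =>
      have ha : hinge t a = t - a := max_eq_left (by linarith [hle a (by simp)])
      simp only [take_succ_cons, drop_succ_cons, mem_cons, forall_eq_or_imp] at hle hge ⊢
      simp only [length_cons, sum_cons, map_cons, Nat.cast_succ, ha]
      linarith [ih k hle.2 hge]

lemma exists_separating_take_drop {l : List ℝ} (hl : l.Pairwise (· ≤ ·)) (k : ℕ) :
    ∃ t, (∀ x ∈ l.take k, x ≤ t) ∧ ∀ x ∈ l.drop k, t ≤ x := by
  rw [← take_append_drop k l, pairwise_append] at hl
  obtain ⟨-, hdrop, htake_drop⟩ := hl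
  cases hd : l.drop k with
  | nil =>
    obtain ⟨t, ht⟩ := (finite_toSet (l.take k)).bddAbove
    exact ⟨t, fun x hx => ht hx, by simp⟩
  | cons b rest =>
    rw [hd, pairwise_cons] at hdrop
    refine ⟨b, fun x hx => htake_drop x hx b (by simp [hd]), ?_⟩
    simpa using hdrop.1

end List

namespace Multiset

lemma sum_map_sort (M : Multiset ℝ) (g : ℝ → ℝ) :
    ((M.sort (· ≤ ·)).map g).sum = (M.map g).sum := by
  conv_rhs => rw [← sort_eq M (· ≤ ·)]
  rfl

lemma min_card_mul_le_kSmallestSum_add_sum_map_hinge (M : Multiset ℝ) (k : ℕ) (t : ℝ) :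
    (min k (card M) : ℕ) * t ≤ kSmallestSum M k + (M.map (hinge t)).sum := by
  have h := (M.sort (· ≤ ·)).length_take_mul_le_sum_take_add_sum_map_hinge k t
  rwa [List.length_take, length_sort, sum_map_sort] at h

lemma exists_min_card_mul_eq_kSmallestSum_add_sum_map_hinge (M : Multiset ℝ) (k : ℕ) :
    ∃ t, (min k (card M) : ℕ) * t = kSmallestSum M k + (M.map (hinge t)).sum := by
  obtain ⟨t, hle, hge⟩ := List.exists_separating_take_drop (pairwise_sort M _) k
  refine ⟨t, ?_⟩
  have h := (M.sort (· ≤ ·)).length_take_mul_eq_sum_take_add_sum_map_hinge k t hle hge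
  rwa [List.length_take, length_sort, sum_map_sort] at h

end Multiset

lemma card_seqMultiset {n : ℕ} (a : Fin n → ℝ) : Multiset.card (seqMultiset a) = n := by
  simp [seqMultiset]

lemma sum_comp_eq_sum_map_seqMultiset {n : ℕ} (a : Fin n → ℝ) (g : ℝ → ℝ) :
    ∑ i, g (a i) = ((seqMultiset a).map g).sum := by
  rw [Finset.sum_eq_multiset_sum, seqMultiset, Multiset.map_map]
  rfl

/-- Converse of the weak Karamata inequality: if the energy inequality holds for all
convex decreasing functions, then weak majorization holds. -/
theorem weak_karamata_converse {n : ℕ} (A B : Fin n → ℝ)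
    (h : ∀ g : ℝ → ℝ, ConvexOn ℝ Set.univ g → Antitone g →
      ∑ i, g (A i) ≤ ∑ i, g (B i)) :
    WeakMaj (seqMultiset A) (seqMultiset B) := by
  intro k
  obtain ⟨t, hB⟩ := (seqMultiset B).exists_min_card_mul_eq_kSmallestSum_add_sum_map_hinge k
  have hA := (seqMultiset A).min_card_mul_le_kSmallestSum_add_sum_map_hinge k t
  have hg := h (hinge t) (convexOn_hinge t) (antitone_hinge t)
  rw [sum_comp_eq_sum_map_seqMultiset, sum_comp_eq_sum_map_seqMultiset] at hg
  rw [card_seqMultiset] at hA hB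
  linarith
end

section
/- Let ρ : S × S → ℝ be symmetric and h : ℝ → ℝ be convex and increasing. If X ⊆ S with |X| = m is an M-set for (S, ρ, m), then X is an M-set for (S, h∘ρ, m). -/
/-- X is an M-set for (S, ρ, m): no injective m-configuration Y strictly weakly
majorizes X, i.e. whenever R_ρ(Y) ▷ R_ρ(X) we also have R_ρ(X) ▷ R_ρ(Y). -/
def IsMSet {S : Type*} {m : ℕ} (ρ : S → S → ℝ) (X : Fin m → S) : Prop :=
  ∀ Y : Fin m → S, Function.Injective Y →
    WeakMaj (pairMultiset ρ Y) (pairMultiset ρ X) →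
    WeakMaj (pairMultiset ρ X) (pairMultiset ρ Y)

/-! Since `h` is increasing it commutes with sorting, so the hypothesis compares prefix sums of
the sorted `h`-values. To pull this back through `h`, let `a`, `b` be the sorted values of
`R_ρ(X)`, `R_ρ(Y)` and `ℓᵢ` the left derivative of `h` at `bᵢ`. Convexity gives
`h bᵢ - h aᵢ ≤ ℓᵢ (bᵢ - aᵢ)`, and the weights `1 / ℓᵢ` are positive and decreasing in `i`, so by
Abel summation nonnegative prefix sums of `h bᵢ - h aᵢ` yield `∑ (bᵢ - aᵢ) ≥ 0`. Hence
`R_ρ(Y) ▷ R_ρ(X)`; the M-set property of `X` gives the converse, and mutual weak majorization of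
multisets of the same size forces `R_ρ(X) = R_ρ(Y)`. -/

open Finset

namespace ConvexOn

variable {f : ℝ → ℝ}

lemma leftDeriv_pos_of_strictMono (hf : ConvexOn ℝ Set.univ f) (hf' : StrictMono f) (x : ℝ) :
    0 < derivWithin f (Set.Iio x) x :=
  calc 0 < slope f (x - 1) x := by
        rw [slope_def_field]
        exact div_pos (sub_pos.2 (hf' (by linarith))) (by linarith)
    _ ≤ derivWithin f (Set.Iio x) x :=
        hf.slope_le_leftDeriv_of_mem_interior (Set.mem_univ _) (by simp) (by linarith)

lemma add_leftDeriv_mul_sub_le {S : Set ℝ} (hf : ConvexOn ℝ S f) {x y : ℝ}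
    (hx : x ∈ interior S) (hy : y ∈ S) :
    f x + derivWithin f (Set.Iio x) x * (y - x) ≤ f y := by
  rcases lt_trichotomy y x with hyx | rfl | hxy
  · have := hf.slope_le_leftDeriv_of_mem_interior hy hx hyx
    rw [slope_def_field, div_le_iff₀ (sub_pos.2 hyx)] at this
    linarith
  · simp
  · have := (hf.leftDeriv_le_rightDeriv_of_mem_interior hx).trans
      (hf.rightDeriv_le_slope_of_mem_interior hx hy hxy)
    rw [slope_def_field, le_div_iff₀ (sub_pos.2 hxy)] at this
    linarith

end ConvexOn

lemma Finset.sum_range_mul_nonneg_of_antitoneOn {R : Type*} [CommRing R] [PartialOrder R]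
    [IsOrderedRing R] {c d : ℕ → R} {n : ℕ} (hc : AntitoneOn c (Set.Iio n))
    (hc₀ : ∀ i < n, 0 ≤ c i) (hd : ∀ k ≤ n, 0 ≤ ∑ i ∈ range k, d i) :
    0 ≤ ∑ i ∈ range n, c i * d i := by
  rcases n.eq_zero_or_pos with rfl | hn
  · simp
  have hparts := sum_range_by_parts c d n
  simp only [smul_eq_mul] at hparts
  rw [hparts]
  have hdiff : ∑ i ∈ range (n - 1), (c (i + 1) - c i) * ∑ j ∈ range (i + 1), d j ≤ 0 :=
    sum_nonpos fun i hi => by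
      have hi : i + 1 < n := by rw [mem_range] at hi; omega
      exact mul_nonpos_of_nonpos_of_nonneg
        (sub_nonpos.2 (hc (Set.mem_Iio.2 (by omega)) (Set.mem_Iio.2 hi) (by omega))) (hd _ hi.le)
  have hlast := mul_nonneg (hc₀ (n - 1) (by omega)) (hd n le_rfl)
  exact sub_nonneg.2 (hdiff.trans hlast)

theorem sum_range_le_sum_range_of_convexOn_of_strictMono {h : ℝ → ℝ}
    (hconv : ConvexOn ℝ Set.univ h) (hmono : StrictMono h) {a b : ℕ → ℝ} {n : ℕ}
    (hb : MonotoneOn b (Set.Iio n))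
    (hab : ∀ k ≤ n, ∑ i ∈ range k, h (a i) ≤ ∑ i ∈ range k, h (b i)) :
    ∑ i ∈ range n, a i ≤ ∑ i ∈ range n, b i := by
  set ℓ : ℕ → ℝ := fun i => derivWithin h (Set.Iio (b i)) (b i)
  have hℓ_pos (i : ℕ) : 0 < ℓ i := hconv.leftDeriv_pos_of_strictMono hmono (b i)
  have hterm (i : ℕ) : (ℓ i)⁻¹ * (h (b i) - h (a i)) ≤ b i - a i := by
    have := hconv.add_leftDeriv_mul_sub_le (x := b i) (by simp) (Set.mem_univ (a i))
    rw [inv_mul_le_iff₀ (hℓ_pos i)]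
    linarith
  have hanti : AntitoneOn (fun i => (ℓ i)⁻¹) (Set.Iio n) := fun i hi j hj hij =>
    inv_anti₀ (hℓ_pos i) (hconv.monotoneOn_leftDeriv (by simp) (by simp) (hb hi hj hij))
  have habel := sum_range_mul_nonneg_of_antitoneOn hanti (fun i _ => (inv_pos.2 (hℓ_pos i)).le)
    (d := fun i => h (b i) - h (a i)) fun k hk => by
      rw [sum_sub_distrib]
      exact sub_nonneg.2 (hab k hk)
  have := habel.trans (sum_le_sum fun i _ => hterm i)
  rw [sum_sub_distrib] at this
  linarith

lemma List.Pairwise.monotoneOn_getD {α : Type*} [Preorder α] {l : List α}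
    (hl : l.Pairwise (· ≤ ·)) (d : α) : MonotoneOn (l.getD · d) (Set.Iio l.length) := by
  intro i hi j hj hij
  dsimp only
  rw [List.getD_eq_getElem _ _ hi, List.getD_eq_getElem _ _ hj]
  exact hl.sortedLE.getElem_le_getElem_of_le hij

lemma List.sum_map_take_eq_sum_range {α M : Type*} [AddCommMonoid M] (f : α → M) (l : List α)
    (d : α) {k : ℕ} (hk : k ≤ l.length) :
    ((l.take k).map f).sum = ∑ i ∈ Finset.range k, f (l.getD i d) := by
  induction k with
  | zero => simp
  | succ k ih =>
    rw [List.take_add_one, List.map_append, List.sum_append, ih (by omega), Finset.sum_range_succ,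
      List.getElem?_eq_getElem (by omega), List.getD_eq_getElem _ _ (by omega)]
    simp

lemma kSmallestSum_map {h : ℝ → ℝ} (hmono : StrictMono h) (M : Multiset ℝ) (k : ℕ) :
    kSmallestSum (M.map h) k = (((M.sort (· ≤ ·)).take k).map h).sum := by
  rw [kSmallestSum, ← Multiset.map_sort h M _ _ fun a _ b _ => hmono.le_iff_le.symm,
    List.map_take]

lemma kSmallestSum_of_card_le {M : Multiset ℝ} {k : ℕ} (hk : Multiset.card M ≤ k) :
    kSmallestSum M k = M.sum := by
  rw [kSmallestSum, List.take_of_length_le (by simpa using hk), ← Multiset.sum_coe,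
    Multiset.sort_eq]

lemma WeakMaj.of_map {h : ℝ → ℝ} (hconv : ConvexOn ℝ Set.univ h) (hmono : StrictMono h)
    {A B : Multiset ℝ} (hcard : Multiset.card A = Multiset.card B)
    (hAB : WeakMaj (A.map h) (B.map h)) : WeakMaj A B := by
  set la := A.sort (· ≤ ·)
  set lb := B.sort (· ≤ ·)
  have hla : la.length = Multiset.card A := Multiset.length_sort _
  have hlb : lb.length = Multiset.card A := by rw [hcard]; exact Multiset.length_sort _
  have hprefix : ∀ k ≤ Multiset.card A, kSmallestSum B k ≤ kSmallestSum A k := by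
    intro k hk
    have hsum (l : List ℝ) (hl : l.length = Multiset.card A) :
        (l.take k).sum = ∑ i ∈ range k, l.getD i 0 := by
      simpa using l.sum_map_take_eq_sum_range id 0 (hl ▸ hk)
    rw [kSmallestSum, kSmallestSum, hsum la hla, hsum lb hlb]
    refine sum_range_le_sum_range_of_convexOn_of_strictMono hconv hmono
      (((Multiset.pairwise_sort A _).monotoneOn_getD 0).mono (Set.Iio_subset_Iio (hla ▸ hk)))
      fun j hj => ?_
    have := hAB j
    rwa [kSmallestSum_map hmono, kSmallestSum_map hmono,
      la.sum_map_take_eq_sum_range h 0 (by omega),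
      lb.sum_map_take_eq_sum_range h 0 (by omega)] at this
  intro k
  rcases le_total k (Multiset.card A) with hk | hk
  · exact hprefix k hk
  · rw [kSmallestSum_of_card_le (hcard ▸ hk), kSmallestSum_of_card_le hk]
    simpa only [kSmallestSum_of_card_le le_rfl, kSmallestSum_of_card_le hcard.ge]
      using hprefix _ le_rfl

lemma WeakMaj.antisymm {A B : Multiset ℝ} (hAB : WeakMaj A B) (hBA : WeakMaj B A)
    (hcard : Multiset.card A = Multiset.card B) : A = B := by
  rw [← Multiset.sort_eq A (· ≤ ·), ← Multiset.sort_eq B (· ≤ ·)]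
  congr 1
  exact List.eq_of_sum_take_eq (by simp [hcard]) fun k _ => le_antisymm (hBA k) (hAB k)

lemma pairMultiset_comp {S : Type*} {m : ℕ} (ρ : S → S → ℝ) (h : ℝ → ℝ) (X : Fin m → S) :
    pairMultiset (fun x y => h (ρ x y)) X = (pairMultiset ρ X).map h := by
  simp only [pairMultiset, Multiset.map_map, Function.comp_def]

theorem isMSet_comp_of_convex_strictMono_general {S : Type*} {m : ℕ} (ρ : S → S → ℝ)
    (h : ℝ → ℝ)
    (hconv : ConvexOn ℝ Set.univ h) (hmono : StrictMono h)
    (X : Fin m → S) (hM : IsMSet ρ X) :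
    IsMSet (fun x y => h (ρ x y)) X := by
  intro Y hY hmaj
  rw [pairMultiset_comp, pairMultiset_comp] at hmaj ⊢
  have hcard : Multiset.card (pairMultiset ρ Y) = Multiset.card (pairMultiset ρ X) := by
    simp [pairMultiset]
  have hYX : WeakMaj (pairMultiset ρ Y) (pairMultiset ρ X) := hmaj.of_map hconv hmono hcard
  rw [(hM Y hY hYX).antisymm hYX hcard.symm]
  exact fun _ => le_rfl

/-- An M-set for ρ is an M-set for h ∘ ρ whenever h is convex and increasing. -/
theorem isMSet_comp_of_convex_strictMono {S : Type*} {m : ℕ} (ρ : S → S → ℝ)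
    (hsym : ∀ x y, ρ x y = ρ y x) (h : ℝ → ℝ)
    (hconv : ConvexOn ℝ Set.univ h) (hmono : StrictMono h)
    (X : Fin m → S) (hX : Function.Injective X) (hM : IsMSet ρ X) :
    IsMSet (fun x y => h (ρ x y)) X :=
  isMSet_comp_of_convex_strictMono_general ρ h hconv hmono X hM
end

section
/- Let p_1,…,p_n be n points on the unit circle S¹ and let φ(x,y) ∈ [0,π] denote the angular (geodesic) distance. For every k with 1 ≤ k ≤ ⌊n/2⌋, if the points are labeled in cyclic order and indices are taken mod n, then Σ_{i=1}^{n} φ(p_i, p_{i+k}) ≤ 2πk. -/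
/-!
Unwrap the angles to a lift `ψ : ℕ → ℝ` with `ψ (j + n) = ψ j + 2π` and
`p (j mod n) = exp (ψ j · i)`; it is nondecreasing because all `θ i` lie in `[0, 2π)`.
Since a chord is shorter than any arc joining its endpoints, `φ(p_i, p_{i+k}) ≤ ψ (i + k) - ψ i`,
and the sum of these differences over one period is `2πk`.
-/

open Real Finset

noncomputable def angularDist (x y : ℂ) : ℝ := 2 * arcsin (‖x - y‖ / 2)

theorem norm_exp_mul_I_sub_exp_mul_I (a b : ℝ) :
    ‖Complex.exp (a * Complex.I) - Complex.exp (b * Complex.I)‖ = |2 * sin ((b - a) / 2)| := by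
  have hfactor : Complex.exp (a * Complex.I) - Complex.exp (b * Complex.I) =
      -Complex.exp (a * Complex.I) * (Complex.exp (Complex.I * ↑(b - a)) - 1) := by
    have hrot : Complex.exp (a * Complex.I) * Complex.exp (Complex.I * ↑(b - a)) =
        Complex.exp (b * Complex.I) := by
      rw [← Complex.exp_add]
      push_cast
      ring_nf
    linear_combination hrot
  rw [hfactor, norm_mul, norm_neg, Complex.norm_exp_ofReal_mul_I, one_mul,
    Complex.norm_exp_I_mul_ofReal_sub_one, Real.norm_eq_abs]

theorem arcsin_abs_sin_le_abs (t : ℝ) : arcsin |sin t| ≤ |t| := by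
  rcases le_or_gt |t| (π / 2) with ht | ht
  · rw [abs_sin_eq_sin_abs_of_abs_le_pi (by linarith [pi_pos]),
      arcsin_sin (by linarith [abs_nonneg t]) ht]
  · linarith [arcsin_le_pi_div_two |sin t|]

theorem angularDist_exp_le (a b : ℝ) :
    angularDist (Complex.exp (a * Complex.I)) (Complex.exp (b * Complex.I)) ≤ |b - a| := by
  have h := arcsin_abs_sin_le_abs ((b - a) / 2)
  rw [abs_div, abs_two] at h
  rw [angularDist, norm_exp_mul_I_sub_exp_mul_I, abs_mul, abs_two,
    mul_div_cancel_left₀ _ two_ne_zero]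
  linarith

theorem sum_range_add_sub_eq_nsmul {G : Type*} [AddCommGroup G] {f : ℕ → G} {n : ℕ} {c : G}
    (hf : ∀ j, f (j + n) = f j + c) (k : ℕ) :
    ∑ i ∈ range n, (f (i + k) - f i) = k • c := by
  induction k with
  | zero => simp
  | succ k ih =>
    have hstep : ∑ i ∈ range n, (f (i + (k + 1)) - f (i + k)) = c := by
      have h := Finset.sum_range_sub (fun i => f (i + k)) n
      rw [zero_add, add_comm n k, hf, add_sub_cancel_left] at h
      simpa only [add_right_comm _ 1 k, add_assoc] using h
    rw [succ_nsmul, ← ih, ← hstep, ← Finset.sum_add_distrib]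
    exact Finset.sum_congr rfl fun i _ => by abel

section AngleLift

variable {n : ℕ} [NeZero n] (θ : Fin n → ℝ)

noncomputable def angleLift (j : ℕ) : ℝ := θ (Fin.ofNat n j) + 2 * π * (j / n : ℕ)

theorem angleLift_add_self (j : ℕ) : angleLift θ (j + n) = angleLift θ j + 2 * π := by
  have hmod : Fin.ofNat n (j + n) = Fin.ofNat n j := by ext; simp
  rw [angleLift, angleLift, hmod, Nat.add_div_right _ (NeZero.pos n)]
  push_cast
  ring

theorem exp_angleLift_mul_I (j : ℕ) :
    Complex.exp (angleLift θ j * Complex.I) = Complex.exp (θ (Fin.ofNat n j) * Complex.I) := by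
  have hperiod : Complex.exp (↑(2 * π * (j / n : ℕ)) * Complex.I) = 1 := by
    rw [← Complex.exp_nat_mul_two_pi_mul_I (j / n)]
    push_cast
    ring_nf
  rw [angleLift, Complex.ofReal_add, add_mul, Complex.exp_add, hperiod, mul_one]

variable {θ}

theorem monotone_angleLift (hmono : Monotone θ) (hθ : ∀ i, θ i ∈ Set.Ico 0 (2 * π)) :
    Monotone (angleLift θ) := by
  intro j j' hjj'
  rcases (Nat.div_le_div_right (c := n) hjj').eq_or_lt with hq | hq
  · have hr : Fin.ofNat n j ≤ Fin.ofNat n j' := by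
      rw [Fin.le_def, Fin.val_ofNat, Fin.val_ofNat]
      have := Nat.div_add_mod j n
      have := Nat.div_add_mod j' n
      nlinarith
    rw [angleLift, angleLift, hq]
    linarith [hmono hr]
  · have hq' : ((j / n : ℕ) : ℝ) + 1 ≤ (j' / n : ℕ) := by exact_mod_cast hq
    rw [angleLift, angleLift]
    nlinarith [(hθ (Fin.ofNat n j)).2, (hθ (Fin.ofNat n j')).1, pi_pos]

end AngleLift

theorem sum_angular_dist_le_general {n : ℕ} [NeZero n] (θ : Fin n → ℝ) (hmono : Monotone θ)
    (hθ : ∀ i, θ i ∈ Set.Ico 0 (2 * Real.pi))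
    (p : Fin n → ℂ) (hp : ∀ i, p i = Complex.exp (θ i * Complex.I))
    (k : ℕ) :
    ∑ i : Fin n, 2 * Real.arcsin (‖p i - p (i + Fin.ofNat n k)‖ / 2) ≤
      2 * Real.pi * k := by
  have hp_lift : ∀ j : ℕ, p (Fin.ofNat n j) = Complex.exp (angleLift θ j * Complex.I) := by
    intro j
    rw [hp, exp_angleLift_mul_I]
  have hlift_mono := monotone_angleLift hmono hθ
  calc ∑ i : Fin n, 2 * arcsin (‖p i - p (i + Fin.ofNat n k)‖ / 2)
      = ∑ i ∈ range n, angularDist (p (Fin.ofNat n i)) (p (Fin.ofNat n (i + k))) := by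
        rw [← Fin.sum_univ_eq_sum_range
          (fun i => angularDist (p (Fin.ofNat n i)) (p (Fin.ofNat n (i + k))))]
        simp only [Fin.ofNat_val_eq_self, Fin.add_ofNat, angularDist]
    _ ≤ ∑ i ∈ range n, (angleLift θ (i + k) - angleLift θ i) := by
        gcongr with i
        rw [hp_lift, hp_lift, ← abs_of_nonneg (sub_nonneg.2 (hlift_mono (Nat.le_add_right i k)))]
        exact angularDist_exp_le _ _
    _ = 2 * π * k := by
        rw [sum_range_add_sub_eq_nsmul (angleLift_add_self θ), nsmul_eq_mul]
        ring

/-- For n points in cyclic order on the unit circle and 1 ≤ k ≤ ⌊n/2⌋, the sum of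
geodesic distances Σᵢ φ(pᵢ, pᵢ₊ₖ) is at most 2πk. -/
theorem sum_angular_dist_le {n : ℕ} [NeZero n] (θ : Fin n → ℝ) (hmono : Monotone θ)
    (hθ : ∀ i, θ i ∈ Set.Ico 0 (2 * Real.pi))
    (p : Fin n → ℂ) (hp : ∀ i, p i = Complex.exp (θ i * Complex.I))
    (k : ℕ) (hk1 : 1 ≤ k) (hk2 : k ≤ n / 2) :
    ∑ i : Fin n, 2 * Real.arcsin (‖p i - p (i + Fin.ofNat n k)‖ / 2) ≤
      2 * Real.pi * k :=
  sum_angular_dist_le_general θ hmono hθ p hp k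
end

section
/- Let f(t) = Σ_{k=0}^{d} f_k G_k^{(n)}(t) with all f_k ≥ 0 and suppose f(t) ≤ 0 for all t ∈ T ⊆ [−1,1). Then for every finite set P = {p_1,…,p_m} of unit vectors in ℝ^n with ⟨p_i,p_j⟩ ∈ T for all i ≠ j, one has m·f_0 ≤ f(1). (Delsarte's linear programming bound.) -/
/-!
The moments `∑ i j, Geg n k ⟪p i, p j⟫` are nonnegative. For the Fischer inner product
`⟨p, q⟩ = ∑ α! p_α q_α` on `ℝ[X₁, …, Xₙ]`, multiplication by `Xᵢ` is adjoint to `∂ᵢ`. Hence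
harmonic polynomials are orthogonal to `‖X‖² · ℝ[X]`, and `⟨p, ⟪y, X⟫ ^ k⟩ = k! p(y)` for `p`
homogeneous of degree `k`. The zonal harmonic `Zₓ`, the homogenization of `Geg n k ⟪x, ·⟫`, is a
positive multiple of `⟪x, X⟫ ^ k` modulo `‖X‖²`, so `⟨Zₓ, Z_y⟩ = c · Geg n k ⟪x, y⟫` with `c > 0`
and the moment is `‖∑ᵢ Z_{pᵢ}‖² / c ≥ 0`. Harmonicity of `Zₓ` reduces, through
`Δ (⟪x, X⟫ u) = ⟪x, X⟫ Δu + 2 ∂ₓu` and Euler's identity, to `∂ₓ Z_{k+1} = (k + 1) Z_k`; the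
normalization `Geg n k 1 = 1` makes the latter an identity between consecutive terms of the
three-term recurrence.

With nonnegative moments, `S = ∑ i j, f ⟪p i, p j⟫ = ∑ₖ fₖ Mₖ ≥ f₀ m²`, while `S ≤ m f(1)` because
the off-diagonal terms are `≤ 0`.
-/

open scoped RealInnerProductSpace

/-- Gegenbauer polynomials for dimension `n`, normalized so that `Geg n k 1 = 1`. -/
noncomputable def Geg (n : ℕ) : ℕ → ℝ → ℝ
  | 0 => fun _ => 1
  | 1 => fun t => t
  | (k + 2) => fun t =>
      ((2 * ((k : ℝ) + 2) + (n : ℝ) - 4) * t * Geg n (k + 1) t -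
          (((k : ℝ) + 2) - 1) * Geg n k t) / (((k : ℝ) + 2) + (n : ℝ) - 3)

open MvPolynomial

namespace MvPolynomial

variable {σ : Type*} [Fintype σ]

noncomputable def fischerWeight (α : σ →₀ ℕ) : ℝ := ∏ i, ((α i).factorial : ℝ)

lemma fischerWeight_pos (α : σ →₀ ℕ) : 0 < fischerWeight α :=
  Finset.prod_pos fun i _ => by positivity

lemma fischerWeight_single_add (i : σ) (α : σ →₀ ℕ) :
    fischerWeight (Finsupp.single i 1 + α) = (α i + 1) * fischerWeight α := by
  classical
  have h (j : σ) : (((Finsupp.single i 1 + α : σ →₀ ℕ) j).factorial : ℝ)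
      = (α j).factorial * if i = j then (α i + 1 : ℝ) else 1 := by
    by_cases hij : i = j
    · subst hij; simp [Nat.factorial_succ, add_comm 1, mul_comm]
    · simp [hij]
  simp only [fischerWeight, h, Finset.prod_mul_distrib, Finset.prod_ite_eq, Finset.mem_univ,
    if_true, mul_comm]

noncomputable def fischerSum (p q : MvPolynomial σ ℝ) : ℝ :=
  ∑ α ∈ p.support, fischerWeight α * p.coeff α * q.coeff α

lemma fischerSum_eq_of_support_subset {p : MvPolynomial σ ℝ} {s : Finset (σ →₀ ℕ)}
    (hs : p.support ⊆ s) (q : MvPolynomial σ ℝ) :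
    fischerSum p q = ∑ α ∈ s, fischerWeight α * p.coeff α * q.coeff α :=
  Finset.sum_subset hs fun α _ hα => by simp [notMem_support_iff.mp hα]

noncomputable def fischer : LinearMap.BilinForm ℝ (MvPolynomial σ ℝ) :=
  LinearMap.mk₂ ℝ fischerSum
    (fun p p' q => by
      classical
      rw [fischerSum_eq_of_support_subset support_add, fischerSum_eq_of_support_subset
        Finset.subset_union_left, fischerSum_eq_of_support_subset Finset.subset_union_right,
        ← Finset.sum_add_distrib]
      simp only [coeff_add, mul_add, add_mul])
    (fun a p q => by
      rw [fischerSum_eq_of_support_subset support_smul, fischerSum, smul_eq_mul, Finset.mul_sum]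
      exact Finset.sum_congr rfl fun α _ => by rw [coeff_smul, smul_eq_mul]; ring)
    (fun p q q' => by simp only [fischerSum, coeff_add, mul_add, Finset.sum_add_distrib])
    (fun a p q => by
      simp only [fischerSum, coeff_smul, smul_eq_mul, Finset.mul_sum]
      exact Finset.sum_congr rfl fun α _ => by ring)

lemma fischer_apply (p q : MvPolynomial σ ℝ) :
    fischer p q = ∑ α ∈ p.support, fischerWeight α * p.coeff α * q.coeff α := rfl

lemma fischer_comm (p q : MvPolynomial σ ℝ) : fischer p q = fischer q p := by
  classical
  simp only [fischer_apply]
  rw [← fischerSum, ← fischerSum, fischerSum_eq_of_support_subset Finset.subset_union_left,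
    fischerSum_eq_of_support_subset Finset.subset_union_right]
  exact Finset.sum_congr rfl fun α _ => by ring

lemma fischer_self_nonneg (p : MvPolynomial σ ℝ) : 0 ≤ fischer p p :=
  Finset.sum_nonneg fun α _ => by
    rw [mul_assoc]; exact mul_nonneg (fischerWeight_pos α).le (mul_self_nonneg _)

lemma fischer_X_mul (i : σ) (u q : MvPolynomial σ ℝ) :
    fischer (X i * u) q = fischer u (pderiv i q) := by
  simp only [fischer_apply, support_X_mul, Finset.sum_map, addLeftEmbedding_apply, coeff_X_mul,
    coeff_pderiv, fischerWeight_single_add]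
  refine Finset.sum_congr rfl fun α _ => ?_
  rw [add_comm α]
  ring

noncomputable def linearForm (x : σ → ℝ) : MvPolynomial σ ℝ := ∑ i, C (x i) * X i

noncomputable def normSq : MvPolynomial σ ℝ := ∑ i, X i ^ 2

noncomputable def laplacian : MvPolynomial σ ℝ →ₗ[ℝ] MvPolynomial σ ℝ :=
  ∑ i, (pderiv i).toLinearMap ∘ₗ (pderiv i).toLinearMap

noncomputable def dirDeriv (x : σ → ℝ) : Derivation ℝ (MvPolynomial σ ℝ) (MvPolynomial σ ℝ) :=
  ∑ i, x i • pderiv i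

lemma laplacian_apply (p : MvPolynomial σ ℝ) : laplacian p = ∑ i, pderiv i (pderiv i p) := by
  simp [laplacian]

lemma dirDeriv_apply (x : σ → ℝ) (p : MvPolynomial σ ℝ) :
    dirDeriv x p = ∑ i, C (x i) * pderiv i p := by
  rw [dirDeriv, ← Derivation.coeFnAddMonoidHom_apply, map_sum, Finset.sum_apply]
  simp [Derivation.coeFnAddMonoidHom_apply, smul_eq_C_mul]

lemma pderiv_linearForm (x : σ → ℝ) (i : σ) : pderiv i (linearForm x) = C (x i) := by
  classical
  simp [linearForm, pderiv_X, Pi.single_apply]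

lemma pderiv_normSq (i : σ) : pderiv i (normSq : MvPolynomial σ ℝ) = 2 * X i := by
  classical
  simp [normSq, pderiv_X, Pi.single_apply]

lemma eval_linearForm (x y : σ → ℝ) : eval y (linearForm x) = x ⬝ᵥ y := by
  simp [linearForm, dotProduct]

lemma eval_normSq (y : σ → ℝ) : eval y (normSq : MvPolynomial σ ℝ) = y ⬝ᵥ y := by
  simp [normSq, dotProduct, sq]

lemma isHomogeneous_linearForm (x : σ → ℝ) : (linearForm x).IsHomogeneous 1 :=
  IsHomogeneous.sum _ _ _ fun i _ => isHomogeneous_C_mul_X _ i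

lemma isHomogeneous_normSq : (normSq : MvPolynomial σ ℝ).IsHomogeneous 2 :=
  IsHomogeneous.sum _ _ _ fun i _ => isHomogeneous_X_pow i 2

lemma dirDeriv_linearForm (x y : σ → ℝ) : dirDeriv x (linearForm y) = C (x ⬝ᵥ y) := by
  simp [dirDeriv_apply, pderiv_linearForm, dotProduct]

lemma dirDeriv_normSq (x : σ → ℝ) : dirDeriv x (normSq : MvPolynomial σ ℝ) = 2 * linearForm x := by
  simp only [dirDeriv_apply, pderiv_normSq, linearForm, Finset.mul_sum]
  exact Finset.sum_congr rfl fun i _ => by ring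

lemma laplacian_mul (u v : MvPolynomial σ ℝ) :
    laplacian (u * v) = laplacian u * v + 2 * ∑ i, pderiv i u * pderiv i v + u * laplacian v := by
  simp only [laplacian_apply, pderiv_mul, map_add, Finset.mul_sum, Finset.sum_mul,
    ← Finset.sum_add_distrib]
  exact Finset.sum_congr rfl fun i _ => by ring

lemma laplacian_linearForm_mul (x : σ → ℝ) (u : MvPolynomial σ ℝ) :
    laplacian (linearForm x * u) = linearForm x * laplacian u + 2 * dirDeriv x u := by
  rw [laplacian_mul, dirDeriv_apply]
  simp [laplacian_apply, pderiv_linearForm, mul_comm, add_comm]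

lemma laplacian_normSq_mul {k : ℕ} {u : MvPolynomial σ ℝ} (hu : u.IsHomogeneous k) :
    laplacian (normSq * u) =
      normSq * laplacian u + (4 * k + 2 * Fintype.card σ : MvPolynomial σ ℝ) * u := by
  have euler : ∑ i, X i * pderiv i u = k * u := by rw [hu.sum_X_mul_pderiv, nsmul_eq_mul]
  have h2 (i : σ) : pderiv i (2 * X i : MvPolynomial σ ℝ) = 2 := by
    rw [← map_ofNat C 2, pderiv_C_mul, pderiv_X_self, mul_one]
  rw [laplacian_mul, laplacian_apply normSq]
  simp only [pderiv_normSq, h2, Finset.sum_const, Finset.card_univ, nsmul_eq_mul, mul_assoc,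
    ← Finset.mul_sum, euler]
  ring

lemma fischer_normSq_mul (u q : MvPolynomial σ ℝ) :
    fischer (normSq * u) q = fischer u (laplacian q) := by
  simp only [normSq, sq, Finset.sum_mul, LinearMap.BilinForm.sum_left, mul_assoc, fischer_X_mul,
    laplacian_apply, LinearMap.BilinForm.sum_right]

lemma fischer_one_one : fischer (1 : MvPolynomial σ ℝ) 1 = 1 := by
  simp [fischer_apply, fischerWeight]

lemma fischer_linearForm_pow {k : ℕ} {p : MvPolynomial σ ℝ} (hp : p.IsHomogeneous k)
    (y : σ → ℝ) : fischer p (linearForm y ^ k) = k.factorial * eval y p := by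
  induction k generalizing p with
  | zero =>
    obtain ⟨a, rfl⟩ : ∃ a, p = C a :=
      ⟨_, totalDegree_eq_zero_iff_eq_C.mp ((totalDegree_zero_iff_isHomogeneous σ).mpr hp)⟩
    rw [← mul_one (C a), C_mul', LinearMap.BilinForm.smul_left, pow_zero, fischer_one_one]
    simp
  | succ k ih =>
    have euler : ∑ i, X i * pderiv i p = (k + 1 : ℝ) • p := by
      rw [hp.sum_X_mul_pderiv, ← Nat.cast_smul_eq_nsmul ℝ, Nat.cast_succ]
    have key : (k + 1 : ℝ) * fischer p (linearForm y ^ (k + 1)) =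
        (k + 1 : ℝ) * ((k + 1).factorial * eval y p) := by
      calc (k + 1 : ℝ) * fischer p (linearForm y ^ (k + 1))
          = ∑ i, fischer (X i * pderiv i p) (linearForm y ^ (k + 1)) := by
            rw [← LinearMap.BilinForm.sum_left, euler, LinearMap.BilinForm.smul_left]
        _ = ∑ i, (k + 1 : ℝ) * y i * fischer (pderiv i p) (linearForm y ^ k) := by
            refine Finset.sum_congr rfl fun i _ => ?_
            have h : ((k + 1 : ℕ) : MvPolynomial σ ℝ) * linearForm y ^ k * C (y i) =
                ((k + 1) * y i : ℝ) • linearForm y ^ k := by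
              rw [smul_eq_C_mul, map_mul, map_add, map_natCast, map_one, Nat.cast_succ]
              ring
            rw [fischer_X_mul, pderiv_pow, pderiv_linearForm, Nat.add_sub_cancel, h,
              LinearMap.BilinForm.smul_right]
        _ = (k + 1 : ℝ) * k.factorial * eval y (∑ i, X i * pderiv i p) := by
            simp only [ih (hp.pderiv), map_sum, map_mul, eval_X, Finset.mul_sum]
            exact Finset.sum_congr rfl fun i _ => by ring
        _ = (k + 1 : ℝ) * ((k + 1).factorial * eval y p) := by
            rw [euler, smul_eval]; push_cast [Nat.factorial_succ]; ring
    exact mul_left_cancel₀ (by positivity) key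

/-- The homogenization `y ↦ ‖y‖ ^ k * Geg (card σ) k (⟪x, y⟫ / ‖y‖)`, built from the three-term
recurrence of `Geg`. -/
noncomputable def zonal (x : σ → ℝ) : ℕ → MvPolynomial σ ℝ
  | 0 => 1
  | 1 => linearForm x
  | k + 2 => C ((k + Fintype.card σ - 1 : ℝ)⁻¹) *
      (C (2 * k + Fintype.card σ : ℝ) * (linearForm x * zonal x (k + 1)) -
        C (k + 1 : ℝ) * (normSq * zonal x k))

lemma natCast_add_card_sub_one_pos (hn : 2 ≤ Fintype.card σ) (k : ℕ) :
    (0 : ℝ) < k + Fintype.card σ - 1 := by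
  have : (2 : ℝ) ≤ Fintype.card σ := by exact_mod_cast hn
  linarith [(k.cast_nonneg : (0 : ℝ) ≤ k)]

lemma zonal_add_two (hn : 2 ≤ Fintype.card σ) (x : σ → ℝ) (k : ℕ) :
    C (k + Fintype.card σ - 1 : ℝ) * zonal x (k + 2) =
      C (2 * k + Fintype.card σ : ℝ) * (linearForm x * zonal x (k + 1)) -
        C (k + 1 : ℝ) * (normSq * zonal x k) := by
  rw [zonal, ← mul_assoc, ← map_mul, mul_inv_cancel₀ (natCast_add_card_sub_one_pos hn k).ne',
    map_one, one_mul]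

lemma isHomogeneous_zonal (x : σ → ℝ) : ∀ k, (zonal x k).IsHomogeneous k
  | 0 => isHomogeneous_one σ ℝ
  | 1 => isHomogeneous_linearForm x
  | k + 2 => by
    have h1 := (isHomogeneous_linearForm x).mul (isHomogeneous_zonal x (k + 1))
    have h2 := isHomogeneous_normSq.mul (isHomogeneous_zonal x k)
    rw [show 1 + (k + 1) = k + 2 by omega] at h1
    rw [show 2 + k = k + 2 by omega] at h2
    exact ((h1.C_mul _).sub (h2.C_mul _)).C_mul _

lemma eval_zonal (x : σ → ℝ) {y : σ → ℝ} (hy : y ⬝ᵥ y = 1) :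
    ∀ k, eval y (zonal x k) = Geg (Fintype.card σ) k (x ⬝ᵥ y)
  | 0 => by simp [zonal, Geg]
  | 1 => by simp [zonal, Geg, eval_linearForm]
  | k + 2 => by
    simp only [zonal, Geg, map_mul, map_sub, eval_C, eval_linearForm, eval_normSq, hy,
      eval_zonal x hy k, eval_zonal x hy (k + 1)]
    ring

lemma dirDeriv_C_mul (x : σ → ℝ) (a : ℝ) (p : MvPolynomial σ ℝ) :
    dirDeriv x (C a * p) = C a * dirDeriv x p := by
  simp

lemma dirDeriv_zonal (hn : 2 ≤ Fintype.card σ) {x : σ → ℝ} (hx : x ⬝ᵥ x = 1) :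
    ∀ k, dirDeriv x (zonal x (k + 1)) = (k + 1) • zonal x k
  | 0 => by simp [zonal, dirDeriv_linearForm, hx]
  | 1 => by
    refine mul_left_cancel₀ (C_ne_zero.mpr (natCast_add_card_sub_one_pos hn 0).ne') ?_
    rw [← dirDeriv_C_mul, zonal_add_two hn]
    simp only [map_sub, dirDeriv_C_mul]
    simp only [zonal, Derivation.leibniz, Derivation.map_one_eq_zero, smul_eq_mul,
      dirDeriv_linearForm, dirDeriv_normSq, hx, map_one]
    simp only [map_add, map_mul, map_natCast, map_one, map_ofNat, Nat.cast_zero]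
    ring
  | k + 2 => by
    have e0 := zonal_add_two hn x k
    refine mul_left_cancel₀ (C_ne_zero.mpr (natCast_add_card_sub_one_pos hn (k + 1)).ne') ?_
    rw [← dirDeriv_C_mul, zonal_add_two hn]
    simp only [map_sub, dirDeriv_C_mul]
    simp only [Derivation.leibniz, smul_eq_mul, dirDeriv_linearForm, dirDeriv_normSq, hx, map_one,
      dirDeriv_zonal hn hx (k + 1), dirDeriv_zonal hn hx k, nsmul_eq_mul]
    simp only [map_add, map_mul, map_sub, map_natCast, map_one, map_ofNat, Nat.cast_add,
      Nat.cast_ofNat] at e0 ⊢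
    linear_combination (-((k : MvPolynomial σ ℝ) + 2)) * e0

lemma laplacian_C_mul (a : ℝ) (p : MvPolynomial σ ℝ) :
    laplacian (C a * p) = C a * laplacian p := by
  rw [C_mul', map_smul, C_mul']

lemma laplacian_zonal (hn : 2 ≤ Fintype.card σ) {x : σ → ℝ} (hx : x ⬝ᵥ x = 1) :
    ∀ k, laplacian (zonal x k) = 0
  | 0 => by simp [zonal, laplacian_apply]
  | 1 => by simp [zonal, laplacian_apply, pderiv_linearForm]
  | k + 2 => by
    refine mul_left_cancel₀ (C_ne_zero.mpr (natCast_add_card_sub_one_pos hn k).ne') ?_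
    rw [← laplacian_C_mul, zonal_add_two hn, map_sub, laplacian_C_mul, laplacian_C_mul,
      laplacian_linearForm_mul, laplacian_normSq_mul (isHomogeneous_zonal x k),
      laplacian_zonal hn hx (k + 1), laplacian_zonal hn hx k, dirDeriv_zonal hn hx k]
    simp only [map_add, map_mul, map_natCast, map_one, map_ofNat, nsmul_eq_mul, Nat.cast_succ]
    ring

lemma exists_zonal_eq (hn : 2 ≤ Fintype.card σ) :
    ∀ k, ∃ γ > 0, ∀ y : σ → ℝ, ∃ q, zonal y k = C γ * linearForm y ^ k + normSq * q
  | 0 => ⟨1, one_pos, fun y => ⟨0, by simp [zonal]⟩⟩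
  | 1 => ⟨1, one_pos, fun y => ⟨0, by simp [zonal]⟩⟩
  | k + 2 => by
    obtain ⟨γ, hγ, h⟩ := exists_zonal_eq hn (k + 1)
    have hc := natCast_add_card_sub_one_pos hn k
    refine ⟨(k + Fintype.card σ - 1 : ℝ)⁻¹ * (2 * k + Fintype.card σ) * γ, by positivity,
      fun y => ?_⟩
    obtain ⟨q, hq⟩ := h y
    refine ⟨C (k + Fintype.card σ - 1 : ℝ)⁻¹ *
      (C (2 * k + Fintype.card σ : ℝ) * (linearForm y * q) - C (k + 1 : ℝ) * zonal y k), ?_⟩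
    rw [zonal, hq, map_mul, map_mul]
    ring

lemma fischer_zonal (hn : 2 ≤ Fintype.card σ) (k : ℕ) :
    ∃ c > 0, ∀ x y : σ → ℝ, x ⬝ᵥ x = 1 → y ⬝ᵥ y = 1 →
      fischer (zonal x k) (zonal y k) = c * Geg (Fintype.card σ) k (x ⬝ᵥ y) := by
  obtain ⟨γ, hγ, h⟩ := exists_zonal_eq hn k
  refine ⟨γ * k.factorial, by positivity, fun x y hx hy => ?_⟩
  obtain ⟨q, hq⟩ := h y
  have harmonic : fischer (zonal x k) (normSq * q) = 0 := by
    rw [fischer_comm, fischer_normSq_mul, laplacian_zonal hn hx, map_zero]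
  rw [hq, map_add, harmonic, C_mul', LinearMap.BilinForm.smul_right,
    fischer_linearForm_pow (isHomogeneous_zonal x k), eval_zonal x hy, add_zero, mul_assoc]

end MvPolynomial

theorem sum_sum_Geg_inner_nonneg {σ ι : Type*} [Fintype σ] [Fintype ι]
    (hn : 2 ≤ Fintype.card σ) (v : ι → EuclideanSpace ℝ σ) (hv : ∀ i, ‖v i‖ = 1) (k : ℕ) :
    0 ≤ ∑ i, ∑ j, Geg (Fintype.card σ) k ⟪v i, v j⟫ := by
  obtain ⟨c, hc, h⟩ := fischer_zonal hn k
  have hinner (i j : ι) : ⟪v i, v j⟫ = (v i).ofLp ⬝ᵥ (v j).ofLp := by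
    simp [EuclideanSpace.inner_eq_star_dotProduct, dotProduct_comm]
  have hunit (i : ι) : (v i).ofLp ⬝ᵥ (v i).ofLp = 1 := by
    rw [← hinner, real_inner_self_eq_norm_sq, hv i, one_pow]
  have hsq := fischer_self_nonneg (∑ i, zonal (v i).ofLp k)
  rw [LinearMap.BilinForm.sum_left] at hsq
  simp only [LinearMap.BilinForm.sum_right, h _ _ (hunit _) (hunit _), ← Finset.mul_sum] at hsq
  simpa only [hinner] using nonneg_of_mul_nonneg_right hsq hc

lemma Geg_one {n : ℕ} (hn : 2 ≤ n) : ∀ k, Geg n k 1 = 1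
  | 0 => rfl
  | 1 => rfl
  | k + 2 => by
    have : (2 : ℝ) ≤ n := by exact_mod_cast hn
    have hc : ((k : ℝ) + 2) + n - 3 ≠ 0 := by linarith [(k.cast_nonneg : (0 : ℝ) ≤ k)]
    simp only [Geg, Geg_one hn k, Geg_one hn (k + 1)]
    rw [div_eq_one_iff_eq hc]
    ring

lemma sum_sum_le_card_mul {ι : Type*} [Fintype ι] {a : ι → ι → ℝ} {b : ℝ}
    (hdiag : ∀ i, a i i = b) (hoff : ∀ i j, i ≠ j → a i j ≤ 0) :
    ∑ i, ∑ j, a i j ≤ Fintype.card ι * b := by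
  classical
  calc ∑ i, ∑ j, a i j ≤ ∑ _i : ι, b := Finset.sum_le_sum fun i _ => by
        rw [← Finset.add_sum_erase _ _ (Finset.mem_univ i), hdiag]
        linarith [Finset.sum_nonpos (s := Finset.univ.erase i) fun j hj =>
          hoff i j (Finset.ne_of_mem_erase hj).symm]
    _ = Fintype.card ι * b := by simp

lemma card_sq_mul_le_sum_sum_sum_Geg {σ ι : Type*} [Fintype σ] [Fintype ι]
    (hn : 2 ≤ Fintype.card σ) {c : ℕ → ℝ} (hc : ∀ k, 0 ≤ c k) (d : ℕ)
    (v : ι → EuclideanSpace ℝ σ) (hv : ∀ i, ‖v i‖ = 1) :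
    (Fintype.card ι : ℝ) ^ 2 * c 0 ≤
      ∑ i, ∑ j, ∑ k ∈ Finset.range (d + 1), c k * Geg (Fintype.card σ) k ⟪v i, v j⟫ := by
  have hswap : ∑ i, ∑ j, ∑ k ∈ Finset.range (d + 1), c k * Geg (Fintype.card σ) k ⟪v i, v j⟫ =
      ∑ k ∈ Finset.range (d + 1), c k * ∑ i, ∑ j, Geg (Fintype.card σ) k ⟪v i, v j⟫ := by
    simp only [Finset.mul_sum]
    exact (Finset.sum_congr rfl fun i _ => Finset.sum_comm).trans Finset.sum_comm
  have hgeg0 : ∑ i : ι, ∑ j : ι, Geg (Fintype.card σ) 0 ⟪v i, v j⟫ = (Fintype.card ι : ℝ) ^ 2 := by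
    simp [Geg, sq]
  rw [hswap, Finset.sum_range_succ', hgeg0, mul_comm]
  exact le_add_of_nonneg_left <| Finset.sum_nonneg fun k _ =>
    mul_nonneg (hc _) (sum_sum_Geg_inner_nonneg hn v hv _)

theorem delsarte_bound_general {n m d : ℕ} (hn : 2 ≤ n) (f : ℝ → ℝ) (c : ℕ → ℝ)
    (hc : ∀ k, 0 ≤ c k)
    (hf : ∀ t ∈ Set.Icc (-1 : ℝ) 1, f t = ∑ k ∈ Finset.range (d + 1), c k * Geg n k t)
    (T : Set ℝ) (hfT : ∀ t ∈ T, f t ≤ 0)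
    (p : Fin m → EuclideanSpace ℝ (Fin n)) (hp : ∀ i, ‖p i‖ = 1)
    (hpt : ∀ i j, i ≠ j → ⟪p i, p j⟫ ∈ T) :
    (m : ℝ) * c 0 ≤ f 1 := by
  have hself (i : Fin m) : ⟪p i, p i⟫ = 1 := by rw [real_inner_self_eq_norm_sq, hp i, one_pow]
  have hmem (i j : Fin m) : ⟪p i, p j⟫ ∈ Set.Icc (-1 : ℝ) 1 :=
    abs_le.mp ((abs_real_inner_le_norm _ _).trans (by rw [hp, hp, one_mul]))
  have hf1 : f 1 = ∑ k ∈ Finset.range (d + 1), c k := by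
    simp [hf 1 ⟨by norm_num, le_rfl⟩, Geg_one hn]
  have key : (m : ℝ) ^ 2 * c 0 ≤ m * f 1 :=
    calc (m : ℝ) ^ 2 * c 0
        ≤ ∑ i, ∑ j, ∑ k ∈ Finset.range (d + 1), c k * Geg n k ⟪p i, p j⟫ := by
          simpa using card_sq_mul_le_sum_sum_sum_Geg (σ := Fin n) (by simpa using hn) hc d p hp
      _ = ∑ i, ∑ j, f ⟪p i, p j⟫ := by simp only [hf _ (hmem _ _)]
      _ ≤ m * f 1 := by
          simpa using
            sum_sum_le_card_mul (fun i => by rw [hself]) fun i j hij => hfT _ (hpt i j hij)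
  rcases m.eq_zero_or_pos with rfl | hm
  · simpa [hf1] using Finset.sum_nonneg fun k _ => hc k
  · rw [sq, mul_assoc] at key
    exact le_of_mul_le_mul_left key (by exact_mod_cast hm)

/-- Delsarte's linear programming bound: if f has nonnegative Gegenbauer coefficients
and f ≤ 0 on T, then any T-spherical code P of cardinality m satisfies m·f₀ ≤ f(1). -/
theorem delsarte_bound {n m d : ℕ} (hn : 2 ≤ n) (f : ℝ → ℝ) (c : ℕ → ℝ)
    (hc : ∀ k, 0 ≤ c k)
    (hf : ∀ t ∈ Set.Icc (-1 : ℝ) 1, f t = ∑ k ∈ Finset.range (d + 1), c k * Geg n k t)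
    (T : Set ℝ) (hT : T ⊆ Set.Ico (-1 : ℝ) 1) (hfT : ∀ t ∈ T, f t ≤ 0)
    (p : Fin m → EuclideanSpace ℝ (Fin n)) (hp : ∀ i, ‖p i‖ = 1)
    (hinj : Function.Injective p)
    (hpt : ∀ i j, i ≠ j → ⟪p i, p j⟫ ∈ T) :
    (m : ℝ) * c 0 ≤ f 1 :=
  delsarte_bound_general hn f c hc hf T hfT p hp hpt
end

section
/- Let P ⊂ S^{n−1} be a set of unit vectors such that ⟨p_i,p_j⟩ ∈ {a,−a} for all i ≠ j, with 0 < a < 1 and n·a² < 1. Then |P| ≤ n(1−a²)/(1−n a²). -/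
open scoped RealInnerProductSpace

/-!
Write `G` for the Gram matrix of the vectors `p i` and `H = ∑ i, p i p iᵀ` for their frame
operator. Both factor through the same coordinate matrix `M` (as `Mᵀ M` and `M Mᵀ`), so they
have the same trace `m` and the same Frobenius norm. Since `H` is `n × n`, Cauchy–Schwarz on its
diagonal gives `m² ≤ n ‖H‖² = n ‖G‖² = n m (1 + (m - 1) a²)`, which rearranges to the bound.
-/

namespace Matrix

variable {ι κ : Type*} [Fintype ι] [Fintype κ]

theorem sum_sq_eq_trace_transpose_mul (A : Matrix ι κ ℝ) :
    ∑ i, ∑ j, A i j ^ 2 = (Aᵀ * A).trace := by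
  simp only [trace, diag, mul_apply, transpose_apply, sq]
  exact Finset.sum_comm

theorem sum_sq_transpose_mul_self (M : Matrix κ ι ℝ) :
    ∑ i, ∑ j, (Mᵀ * M) i j ^ 2 = ∑ k, ∑ l, (M * Mᵀ) k l ^ 2 := by
  simp only [sum_sq_eq_trace_transpose_mul, transpose_mul, transpose_transpose, Matrix.mul_assoc]
  rw [trace_mul_comm]
  simp only [Matrix.mul_assoc]

theorem trace_sq_le_card_mul_sum_sq (A : Matrix κ κ ℝ) :
    A.trace ^ 2 ≤ Fintype.card κ * ∑ k, ∑ l, A k l ^ 2 := by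
  have diag_le : ∑ k, A k k ^ 2 ≤ ∑ k, ∑ l, A k l ^ 2 :=
    Finset.sum_le_sum fun k _ =>
      Finset.single_le_sum (fun l _ => sq_nonneg (A k l)) (Finset.mem_univ k)
  calc A.trace ^ 2 ≤ Fintype.card κ * ∑ k, A k k ^ 2 := sq_sum_le_card_mul_sum_sq
    _ ≤ Fintype.card κ * ∑ k, ∑ l, A k l ^ 2 := by gcongr

theorem trace_sq_le_card_mul_sum_sq_transpose_mul_self (M : Matrix κ ι ℝ) :
    (Mᵀ * M).trace ^ 2 ≤ Fintype.card κ * ∑ i, ∑ j, (Mᵀ * M) i j ^ 2 := by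
  rw [sum_sq_transpose_mul_self, trace_mul_comm]
  exact trace_sq_le_card_mul_sum_sq _

end Matrix

open Matrix

variable {ι E : Type*} [Fintype ι] [NormedAddCommGroup E] [InnerProductSpace ℝ E]

theorem sq_sum_norm_sq_le_finrank_mul_sum_sq_inner [FiniteDimensional ℝ E] (v : ι → E) :
    (∑ i, ‖v i‖ ^ 2) ^ 2 ≤ Module.finrank ℝ E * ∑ i, ∑ j, ⟪v i, v j⟫ ^ 2 := by
  set M := of fun k i => (stdOrthonormalBasis ℝ E).repr (v i) k
  have gram_eq : gram ℝ v = Mᵀ * M := by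
    rw [gram_eq_conjTranspose_mul (stdOrthonormalBasis ℝ E) v,
      conjTranspose_eq_transpose_of_trivial]
  have inner_eq (i j : ι) : ⟪v i, v j⟫ = (Mᵀ * M) i j := by
    rw [← gram_eq, gram_apply]
  have trace_eq : ∑ i, ‖v i‖ ^ 2 = (Mᵀ * M).trace := by
    simp only [trace, diag, ← inner_eq, real_inner_self_eq_norm_sq]
  simpa only [trace_eq, inner_eq, Fintype.card_fin] using
    trace_sq_le_card_mul_sum_sq_transpose_mul_self M

theorem sum_sq_inner_of_equiangular {p : ι → E} {a : ℝ} (hp : ∀ i, ‖p i‖ = 1)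
    (hip : ∀ i j, i ≠ j → ⟪p i, p j⟫ = a ∨ ⟪p i, p j⟫ = -a) :
    ∑ i, ∑ j, ⟪p i, p j⟫ ^ 2 = Fintype.card ι * (1 - a ^ 2 + Fintype.card ι * a ^ 2) := by
  classical
  have entry : ∀ i j, ⟪p i, p j⟫ ^ 2 = a ^ 2 + if i = j then 1 - a ^ 2 else 0 := by
    intro i j
    by_cases hij : i = j
    · simp [hij, hp]
    · rcases hip i j hij with h | h <;> simp [h, hij]
  simp only [entry, Finset.sum_add_distrib, Finset.sum_ite_eq, Finset.mem_univ, if_true,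
    Finset.sum_const, Finset.card_univ, nsmul_eq_mul]
  ring

theorem relative_bound_general {n m : ℕ} (a : ℝ)
    (hna : (n : ℝ) * a ^ 2 < 1)
    (p : Fin m → EuclideanSpace ℝ (Fin n)) (hp : ∀ i, ‖p i‖ = 1)
    (hip : ∀ i j, i ≠ j → ⟪p i, p j⟫ = a ∨ ⟪p i, p j⟫ = -a) :
    (m : ℝ) ≤ (n : ℝ) * (1 - a ^ 2) / (1 - (n : ℝ) * a ^ 2) := by
  have frame := sq_sum_norm_sq_le_finrank_mul_sum_sq_inner p
  simp only [hp, sum_sq_inner_of_equiangular hp hip, finrank_euclideanSpace_fin,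
    Fintype.card_fin, one_pow, Finset.sum_const, Finset.card_univ, nsmul_eq_mul, mul_one] at frame
  rw [le_div_iff₀ (by linarith)]
  rcases m.eq_zero_or_pos with rfl | hm
  · rcases n.eq_zero_or_pos with rfl | hn
    · simp
    · have hn_one : (1 : ℝ) ≤ n := by exact_mod_cast hn
      push_cast
      nlinarith
  · have hm_pos : (0 : ℝ) < m := by exact_mod_cast hm
    nlinarith

/-- The relative bound for equiangular sets of unit vectors: if all pairwise inner
products are ±a with n·a² < 1, then m ≤ n(1−a²)/(1−na²). -/
theorem relative_bound {n m : ℕ} (hn : 2 ≤ n) (a : ℝ) (ha0 : 0 < a) (ha1 : a < 1)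
    (hna : (n : ℝ) * a ^ 2 < 1)
    (p : Fin m → EuclideanSpace ℝ (Fin n)) (hp : ∀ i, ‖p i‖ = 1)
    (hinj : Function.Injective p)
    (hip : ∀ i j, i ≠ j → ⟪p i, p j⟫ = a ∨ ⟪p i, p j⟫ = -a) :
    (m : ℝ) ≤ (n : ℝ) * (1 - a ^ 2) / (1 - (n : ℝ) * a ^ 2) :=
  relative_bound_general a hna p hp hip
end

section
/- For m ≥ 2, real s with 0 < s ≤ 2, and points p_1,…,p_m on S^{n−1}, define ρ_s(x,y) = ‖x−y‖^s. Then the constant multiset with all m(m−1)/2 entries equal to (2m/(m−1))^{s/2} weakly majorizes the multiset {ρ_s(p_i,p_j) : i < j}. -/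
/-!
Weak majorization by a constant multiset of the same cardinality `N` only needs a bound on
the total, because the mean of the `k` smallest entries never exceeds the overall mean.
For unit vectors `∑_{i<j} ‖pᵢ - pⱼ‖² = m² - ‖∑ pᵢ‖² ≤ m²`, and Jensen's inequality for the
concave map `t ↦ t ^ (s / 2)` turns this into `∑_{i<j} ‖pᵢ - pⱼ‖ ^ s ≤ N (m² / N) ^ (s / 2)`
with `N = m (m - 1) / 2`.
-/

open Finset

theorem List.Pairwise.length_mul_sum_take_le {l : List ℝ} (hl : l.Pairwise (· ≤ ·)) (k : ℕ) :
    (l.length : ℝ) * (l.take k).sum ≤ (l.take k).length * l.sum := by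
  have hsplit := l.take_append_drop k
  have hle : ∀ a ∈ l.take k, ∀ b ∈ l.drop k, a ≤ b := by
    rw [← hsplit] at hl
    exact (List.pairwise_append.1 hl).2.2
  have hcross : ((l.drop k).length : ℝ) * (l.take k).sum ≤ (l.take k).length * (l.drop k).sum := by
    have h := List.card_nsmul_le_sum ((l.drop k).map (((l.take k).length : ℝ) * ·)) (l.take k).sum
      (List.forall_mem_map.2 fun b hb => by
        simpa using List.sum_le_card_nsmul _ b fun a ha => hle a ha b hb)
    rwa [List.length_map, nsmul_eq_mul, List.sum_map_mul_left, List.map_id'] at h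
  have hlen : (l.length : ℝ) = (l.take k).length + (l.drop k).length := by
    rw [← Nat.cast_add, ← List.length_append, hsplit]
  have hsum : l.sum = (l.take k).sum + (l.drop k).sum := by rw [← List.sum_append, hsplit]
  rw [hlen, hsum]
  linarith

theorem card_mul_kSmallestSum_le (M : Multiset ℝ) (k : ℕ) :
    (M.card : ℝ) * kSmallestSum M k ≤ (min k M.card : ℕ) * M.sum := by
  have h := (M.pairwise_sort (· ≤ ·)).length_mul_sum_take_le k
  have hsum : (M.sort (· ≤ ·)).sum = M.sum := by rw [← Multiset.sum_coe, Multiset.sort_eq]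
  rwa [List.length_take, Multiset.length_sort, hsum] at h

theorem kSmallestSum_replicate (N k : ℕ) (y : ℝ) :
    kSmallestSum (Multiset.replicate N y) k = (min k N : ℕ) * y := by
  have hsort : (Multiset.replicate N y).sort (· ≤ ·) = List.replicate N y := by
    rw [List.eq_replicate_iff, Multiset.length_sort, Multiset.card_replicate]
    exact ⟨rfl, fun b hb => Multiset.eq_of_mem_replicate ((Multiset.mem_sort _).1 hb)⟩
  rw [kSmallestSum, hsort, List.take_replicate, List.sum_replicate, nsmul_eq_mul]

theorem weakMaj_replicate_card_of_sum_le {M : Multiset ℝ} {y : ℝ} (hM : M.sum ≤ M.card * y) :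
    WeakMaj (Multiset.replicate M.card y) M := by
  intro k
  rw [kSmallestSum_replicate]
  rcases M.empty_or_exists_mem with rfl | ⟨x, hx⟩
  · simp [kSmallestSum]
  have hcard : (0 : ℝ) < M.card := by exact_mod_cast Multiset.card_pos_iff_exists_mem.2 ⟨x, hx⟩
  refine le_of_mul_le_mul_left ?_ hcard
  calc (M.card : ℝ) * kSmallestSum M k ≤ (min k M.card : ℕ) * M.sum := card_mul_kSmallestSum_le M k
    _ ≤ (min k M.card : ℕ) * (M.card * y) := by gcongr
    _ = M.card * ((min k M.card : ℕ) * y) := by ring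

theorem card_filter_fst_lt_snd (m : ℕ) :
    #(univ.filter fun q : Fin m × Fin m => q.1 < q.2) = m * (m - 1) / 2 := by
  rw [card_filter, ← univ_product_univ, sum_product]
  have hrow : ∀ i : Fin m, (∑ j : Fin m, if i < j then 1 else 0) = m - 1 - (i : ℕ) := by
    intro i
    rw [← card_filter, filter_lt_eq_Ioi, Fin.card_Ioi]
  simp only [hrow]
  rw [Fin.sum_univ_eq_sum_range (fun i => m - 1 - i), ← sum_range_id m,
    ← sum_range_reflect (fun i => i) m]

theorem two_mul_sum_filter_lt_le {ι : Type*} [Fintype ι] [LinearOrder ι] (f : ι → ι → ℝ)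
    (hf : ∀ i j, 0 ≤ f i j) (hsymm : ∀ i j, f i j = f j i) :
    2 * ∑ q ∈ univ.filter (fun q : ι × ι => q.1 < q.2), f q.1 q.2 ≤ ∑ i, ∑ j, f i j := by
  set T := univ.filter fun q : ι × ι => q.1 < q.2
  set T' := univ.filter fun q : ι × ι => q.2 < q.1
  have hswap : ∑ q ∈ T', f q.1 q.2 = ∑ q ∈ T, f q.1 q.2 :=
    sum_nbij' Prod.swap Prod.swap (by simp [T, T']) (by simp [T, T']) (by simp) (by simp)
      fun q _ => hsymm _ _
  have hdisj : Disjoint T T' := disjoint_filter.2 fun q _ h => h.not_gt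
  calc 2 * ∑ q ∈ T, f q.1 q.2 = ∑ q ∈ T ∪ T', f q.1 q.2 := by rw [sum_union hdisj, hswap]; ring
    _ ≤ ∑ q : ι × ι, f q.1 q.2 := sum_le_sum_of_subset_of_nonneg (subset_univ _) fun q _ _ => hf _ _
    _ = ∑ i, ∑ j, f i j := Fintype.sum_prod_type _

section InnerProductSpace

variable {E : Type*} [NormedAddCommGroup E] [InnerProductSpace ℝ E]

theorem sum_sum_norm_sub_sq {ι : Type*} [Fintype ι] (p : ι → E) :
    ∑ i, ∑ j, ‖p i - p j‖ ^ 2 = 2 * Fintype.card ι * ∑ i, ‖p i‖ ^ 2 - 2 * ‖∑ i, p i‖ ^ 2 := by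
  have hinner : ∑ i, ∑ j, inner ℝ (p i) (p j) = ‖∑ i, p i‖ ^ 2 := by
    simp_rw [← real_inner_self_eq_norm_sq, sum_inner, inner_sum]
  have hterm : ∀ i j, ‖p i - p j‖ ^ 2 = ‖p i‖ ^ 2 - 2 * inner ℝ (p i) (p j) + ‖p j‖ ^ 2 :=
    fun i j => norm_sub_sq_real _ _
  simp only [hterm, sum_add_distrib, sum_sub_distrib, ← mul_sum, hinner, sum_const, card_univ,
    nsmul_eq_mul]
  ring

theorem sum_filter_lt_norm_sub_sq_le {ι : Type*} [Fintype ι] [LinearOrder ι] {p : ι → E}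
    (hp : ∀ i, ‖p i‖ = 1) :
    ∑ q ∈ univ.filter (fun q : ι × ι => q.1 < q.2), ‖p q.1 - p q.2‖ ^ 2
      ≤ (Fintype.card ι : ℝ) ^ 2 := by
  have h := two_mul_sum_filter_lt_le (fun i j => ‖p i - p j‖ ^ 2) (fun _ _ => by positivity)
    fun i j => by rw [norm_sub_rev]
  simp only [sum_sum_norm_sub_sq, hp, one_pow, sum_const, card_univ, nsmul_one] at h
  nlinarith [sq_nonneg ‖∑ i, p i‖]

end InnerProductSpace

theorem sum_rpow_le_card_mul_rpow_mean {ι : Type*} (t : Finset ι) {x : ι → ℝ}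
    (hx : ∀ i ∈ t, 0 ≤ x i) {r : ℝ} (hr0 : 0 ≤ r) (hr1 : r ≤ 1) :
    ∑ i ∈ t, x i ^ r ≤ #t * ((∑ i ∈ t, x i) / #t) ^ r := by
  rcases t.eq_empty_or_nonempty with rfl | ht
  · simp
  have hcard : (0 : ℝ) < #t := by exact_mod_cast ht.card_pos
  have hw : ∑ _i ∈ t, (#t : ℝ)⁻¹ = 1 := by rw [sum_const, nsmul_eq_mul, mul_inv_cancel₀ hcard.ne']
  have hJensen := (Real.concaveOn_rpow hr0 hr1).le_map_sum (fun _ _ => inv_nonneg.2 hcard.le) hw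
    fun i hi => Set.mem_Ici.2 (hx i hi)
  simp only [smul_eq_mul, inv_mul_eq_div, ← sum_div] at hJensen
  exact (div_le_iff₀' hcard).1 hJensen

theorem sq_div_mul_sub_one_div_two (x : ℝ) : x ^ 2 / (x * (x - 1) / 2) = 2 * x / (x - 1) := by
  rcases eq_or_ne x 0 with rfl | hx
  · simp
  rw [sq, mul_div_assoc x (x - 1), mul_div_mul_left _ _ hx, div_div_eq_mul_div, mul_comm]

theorem replicate_weakMaj_riesz_general {n m : ℕ} (s : ℝ) (hs0 : 0 < s)
    (hs2 : s ≤ 2) (p : Fin m → EuclideanSpace ℝ (Fin n)) (hp : ∀ i, ‖p i‖ = 1) :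
    WeakMaj
      (Multiset.replicate (m * (m - 1) / 2) ((2 * (m : ℝ) / ((m : ℝ) - 1)) ^ (s / 2)))
      (pairMultiset (fun x y => ‖x - y‖ ^ s) p) := by
  set T := univ.filter fun q : Fin m × Fin m => q.1 < q.2
  have hcard : (pairMultiset (fun x y => ‖x - y‖ ^ s) p).card = #T := by
    rw [pairMultiset, Multiset.card_map, card_val]
  have hT : #T = m * (m - 1) / 2 := card_filter_fst_lt_snd m
  have hTR : (#T : ℝ) = m * (m - 1) / 2 := by
    rw [hT, ← Nat.choose_two_right, Nat.cast_choose_two]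
  rw [← hT, ← hcard]
  refine weakMaj_replicate_card_of_sum_le ?_
  calc (pairMultiset (fun x y => ‖x - y‖ ^ s) p).sum
      = ∑ q ∈ T, (‖p q.1 - p q.2‖ ^ 2) ^ (s / 2) := sum_congr rfl fun q _ => by
        rw [← Real.rpow_natCast, ← Real.rpow_mul (norm_nonneg _)]
        ring_nf
    _ ≤ #T * ((∑ q ∈ T, ‖p q.1 - p q.2‖ ^ 2) / #T) ^ (s / 2) :=
        sum_rpow_le_card_mul_rpow_mean T (fun _ _ => by positivity) (by positivity) (by linarith)
    _ ≤ #T * ((m : ℝ) ^ 2 / #T) ^ (s / 2) := by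
        gcongr
        simpa using sum_filter_lt_norm_sub_sq_le hp
    _ = _ := by rw [hcard, hTR, sq_div_mul_sub_one_div_two]

/-- For 0 < s ≤ 2 and unit vectors p₁,…,p_m, the constant multiset with all
m(m−1)/2 entries equal to (2m/(m−1))^{s/2} weakly majorizes the multiset of pairwise
values ‖pᵢ−pⱼ‖^s. -/
theorem replicate_weakMaj_riesz {n m : ℕ} (hm : 2 ≤ m) (s : ℝ) (hs0 : 0 < s)
    (hs2 : s ≤ 2) (p : Fin m → EuclideanSpace ℝ (Fin n)) (hp : ∀ i, ‖p i‖ = 1) :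
    WeakMaj
      (Multiset.replicate (m * (m - 1) / 2) ((2 * (m : ℝ) / ((m : ℝ) - 1)) ^ (s / 2)))
      (pairMultiset (fun x y => ‖x - y‖ ^ s) p) :=
  replicate_weakMaj_riesz_general s hs0 hs2 p hp
end
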